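/- arXiv:1401.3780 — 2 statements merged into one kernel-verified Lean document; each statement's English description precedes it below -/
import Mathlib

section
/- Let G be connected of order n ≥ 2 and H a family of n non-trivial graphs where each H_i is k_i-metric dimensional and has diameter at most 2. Then for every k ≤ min_i k_i, dim_k(G⊙H) = Σ_{i=1}^n dim_k(H_i). -/
open SimpleGraph

/-- `S` is a `k`-metric generator for `G`: every pair of distinct vertices is
distinguished (has different distances) by at least `k` vertices of `S`. -/
def kMetricGen {V : Type*} [Fintype V] (G : SimpleGraph V) (k : ℕ) (S : Set V) : Prop :=
  ∀ u v : V, u ≠ v → ∃ T : Finset V, ↑T ⊆ S ∧ k ≤ T.card ∧ ∀ w ∈ T, G.dist u w ≠ G.dist v w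

/-- `G` is `k`-metric dimensional: `k` is the largest integer admitting a `k`-metric generator. -/
def kMetricDimensional {V : Type*} [Fintype V] (G : SimpleGraph V) (k : ℕ) : Prop :=
  (∃ S : Set V, kMetricGen G k S) ∧ ∀ k' : ℕ, (∃ S : Set V, kMetricGen G k' S) → k' ≤ k

/-- The `k`-metric dimension of `G`. -/
noncomputable def kMetricDim {V : Type*} [Fintype V] (G : SimpleGraph V) (k : ℕ) : ℕ :=
  sInf {m | ∃ S : Finset V, kMetricGen G k ↑S ∧ S.card = m}

/-- A `k`-metric basis: a minimum-cardinality `k`-metric generator. -/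
def kMetricBasis {V : Type*} [Fintype V] (G : SimpleGraph V) (k : ℕ) (B : Finset V) : Prop :=
  kMetricGen G k ↑B ∧ ∀ T : Finset V, kMetricGen G k ↑T → B.card ≤ T.card

/-- Auxiliary relation for the corona product. -/
def coronaRel {V : Type*} {W : V → Type*} (G : SimpleGraph V) (H : ∀ v, SimpleGraph (W v)) :
    (V ⊕ (Σ v, W v)) → (V ⊕ (Σ v, W v)) → Prop
  | Sum.inl a, Sum.inl b => G.Adj a b
  | Sum.inl a, Sum.inr b => a = b.1
  | Sum.inr a, Sum.inr b => ∃ h : a.1 = b.1, (H b.1).Adj (h ▸ a.2) b.2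
  | _, _ => False

/-- The corona product `G ⊙ 𝓗`: one copy of `G`, and each vertex `v` of `G` joined by an
edge to every vertex of its own copy of `H v`. -/
def corona {V : Type*} {W : V → Type*} (G : SimpleGraph V) (H : ∀ v, SimpleGraph (W v)) :
    SimpleGraph (V ⊕ (Σ v, W v)) :=
  SimpleGraph.fromRel (coronaRel G H)

/-- The join `K₁ + H`: a new vertex (`none`) adjacent to every vertex of `H`. -/
def K1join {U : Type*} (H : SimpleGraph U) : SimpleGraph (Option U) :=
  SimpleGraph.fromRel (fun x y => match x, y with
    | none, some _ => True
    | some a, some b => H.Adj a b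
    | _, _ => False)

/-- `𝒞(H) = min_{x ≠ y} |(N(x) △ N(y)) ∪ {x,y}|`. -/
noncomputable def CC {U : Type*} (H : SimpleGraph U) : ℕ :=
  sInf {m | ∃ x y : U, x ≠ y ∧
    (symmDiff (H.neighborSet x) (H.neighborSet y) ∪ {x, y}).ncard = m}

/-!
When every `H v` has diameter at most 2, distances inside the copy of `H v` in `G ⊙ 𝓗` are
those of `H v`, while a vertex outside that copy sees all of it at the same distance (through
the hub `v`). Hence a `k`-metric generator of the corona restricts to a `k`-metric generator of
every `H v`, which gives `≥`. Conversely, the union of `k`-metric bases of the `H v` generates: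
two vertices of one copy are resolved inside it, and any other pair is resolved by every vertex
of a whole copy, which has at least `k` vertices.
-/

section MetricGenerators

variable {U : Type*} [Fintype U] {G : SimpleGraph U} {k k' : ℕ}

lemma kMetricGen.of_le {S : Set U} (h : kMetricGen G k' S) (hk : k ≤ k') : kMetricGen G k S := by
  intro u v huv
  obtain ⟨T, hTS, hT, hd⟩ := h u v huv
  exact ⟨T, hTS, hk.trans hT, hd⟩

lemma kMetricGen.mono {S S' : Set U} (h : kMetricGen G k S) (hS : S ⊆ S') :
    kMetricGen G k S' := by
  intro u v huv
  obtain ⟨T, hTS, hT, hd⟩ := h u v huv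
  exact ⟨T, hTS.trans hS, hT, hd⟩

lemma kMetricGen.le_card [Nontrivial U] {S : Finset U} (h : kMetricGen G k S) : k ≤ S.card := by
  obtain ⟨x, y, hxy⟩ := exists_pair_ne U
  obtain ⟨T, hTS, hT, -⟩ := h x y hxy
  exact hT.trans (Finset.card_le_card (Finset.coe_subset.mp hTS))

lemma kMetricDimensional.exists_kMetricGen (h : kMetricDimensional G k') (hk : k ≤ k') :
    ∃ S : Set U, kMetricGen G k S :=
  h.1.imp fun _ hS => hS.of_le hk

lemma kMetricDim_le_card {S : Finset U} (h : kMetricGen G k S) : kMetricDim G k ≤ S.card :=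
  Nat.sInf_le ⟨S, h, rfl⟩

lemma exists_kMetricGen_card_eq_kMetricDim (h : ∃ S : Set U, kMetricGen G k S) :
    ∃ S : Finset U, kMetricGen G k S ∧ S.card = kMetricDim G k := by
  obtain ⟨S, hS⟩ := h
  exact Nat.sInf_mem (s := {m | ∃ S : Finset U, kMetricGen G k S ∧ S.card = m})
    ⟨_, Finset.univ, hS.mono (by simp), rfl⟩

end MetricGenerators

section Distances

variable {V : Type*} {W : V → Type*} {G : SimpleGraph V} {H : ∀ v, SimpleGraph (W v)}

@[simp]
lemma corona_adj_inl_inl {a b : V} : (corona G H).Adj (.inl a) (.inl b) ↔ G.Adj a b := by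
  simp only [corona, fromRel_adj, coronaRel, ne_eq, Sum.inl.injEq]
  exact ⟨fun h => h.2.elim id .symm, fun h => ⟨h.ne, .inl h⟩⟩

@[simp]
lemma corona_adj_inl_inr {a v : V} {x : W v} :
    (corona G H).Adj (.inl a) (.inr ⟨v, x⟩) ↔ a = v := by
  simp [corona, coronaRel]

@[simp]
lemma corona_adj_inr_inl {a v : V} {x : W v} :
    (corona G H).Adj (.inr ⟨v, x⟩) (.inl a) ↔ v = a := by
  simp [corona, coronaRel, eq_comm]

@[simp]
lemma corona_adj_inr_inr_self {v : V} {x y : W v} :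
    (corona G H).Adj (.inr ⟨v, x⟩) (.inr ⟨v, y⟩) ↔ (H v).Adj x y := by
  simp only [corona, fromRel_adj, coronaRel, ne_eq, Sum.inr.injEq, Sigma.mk.injEq, heq_eq_eq,
    true_and, exists_true_left]
  exact ⟨fun h => h.2.elim id .symm, fun h => ⟨h.ne, .inl h⟩⟩

lemma corona_not_adj_inr_inr {v u : V} (hvu : v ≠ u) {x : W v} {y : W u} :
    ¬ (corona G H).Adj (.inr ⟨v, x⟩) (.inr ⟨u, y⟩) := by
  simp [corona, coronaRel, hvu, Ne.symm hvu]

open Classical in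
/-- The distance in `G ⊙ 𝓗`, as given by its closed formula when every `H v` has diameter at
most 2. -/
noncomputable def coronaDist (G : SimpleGraph V) (H : ∀ v, SimpleGraph (W v)) :
    V ⊕ (Σ v, W v) → V ⊕ (Σ v, W v) → ℕ
  | .inl a, .inl b => G.dist a b
  | .inl a, .inr b => G.dist a b.1 + 1
  | .inr a, .inl b => G.dist a.1 b + 1
  | .inr a, .inr b => if h : a.1 = b.1 then (H b.1).dist (h ▸ a.2) b.2 else G.dist a.1 b.1 + 2

@[simp]
lemma coronaDist_inr_inr_self {v : V} (x y : W v) :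
    coronaDist G H (.inr ⟨v, x⟩) (.inr ⟨v, y⟩) = (H v).dist x y := by
  simp [coronaDist]

lemma coronaDist_inr_inr_of_ne {v u : V} (hvu : v ≠ u) (x : W v) (y : W u) :
    coronaDist G H (.inr ⟨v, x⟩) (.inr ⟨u, y⟩) = G.dist v u + 2 := by
  simp [coronaDist, hvu]

lemma coronaDist_self (a : V ⊕ (Σ v, W v)) : coronaDist G H a a = 0 := by
  rcases a with a | ⟨v, x⟩ <;> simp [coronaDist]

lemma coronaDist_le_of_adj (hdiam : ∀ v, ∀ x y : W v, (H v).dist x y ≤ 2)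
    {a c : V ⊕ (Σ v, W v)} (hac : (corona G H).Adj a c) (b : V ⊕ (Σ v, W v)) :
    coronaDist G H a b ≤ 1 + coronaDist G H c b := by
  rcases a with a | ⟨v, x⟩ <;> rcases c with c | ⟨u, z⟩
  · have hac := corona_adj_inl_inl.mp hac
    have htri (w : V) := hac.reachable.dist_triangle_left w
    rw [dist_eq_one_iff_adj.mpr hac] at htri
    rcases b with w | ⟨w, y⟩
    · simpa only [coronaDist, add_comm] using htri w
    · simp only [coronaDist]
      have := htri w
      omega
  · obtain rfl := corona_adj_inl_inr.mp hac
    rcases b with w | ⟨w, y⟩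
    · simp only [coronaDist]
      omega
    · by_cases hw : a = w
      · subst hw
        simp [coronaDist]
      · simp [coronaDist, hw]
        omega
  · obtain rfl := corona_adj_inr_inl.mp hac
    rcases b with w | ⟨w, y⟩
    · simp only [coronaDist]
      omega
    · by_cases hw : v = w
      · subst hw
        simpa [coronaDist] using hdiam v x y
      · simp [coronaDist, hw]
        omega
  · by_cases hvu : v = u
    · subst hvu
      have hxz := corona_adj_inr_inr_self.mp hac
      rcases b with w | ⟨w, y⟩
      · simp [coronaDist]
      · by_cases hw : v = w
        · subst hw
          have := hxz.reachable.dist_triangle_left y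
          rw [dist_eq_one_iff_adj.mpr hxz] at this
          simpa [add_comm] using this
        · simp [coronaDist, hw]
    · exact absurd hac (corona_not_adj_inr_inr hvu)

lemma coronaDist_le_length (hdiam : ∀ v, ∀ x y : W v, (H v).dist x y ≤ 2)
    {a b : V ⊕ (Σ v, W v)} (p : (corona G H).Walk a b) : coronaDist G H a b ≤ p.length := by
  induction p with
  | nil => simp [coronaDist_self]
  | cons h q ih =>
    rw [Walk.length_cons]
    exact (coronaDist_le_of_adj hdiam h _).trans (by omega)

variable (G H) in
abbrev coronaInlHom : G →g corona G H := ⟨Sum.inl, corona_adj_inl_inl.mpr⟩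

variable (G H) in
abbrev coronaCopyHom (v : V) : H v →g corona G H :=
  ⟨fun x => .inr ⟨v, x⟩, corona_adj_inr_inr_self.mpr⟩

lemma exists_walk_length_eq_coronaDist (hG : G.Connected) (hH : ∀ v, (H v).Connected)
    (a b : V ⊕ (Σ v, W v)) : ∃ p : (corona G H).Walk a b, p.length = coronaDist G H a b := by
  rcases a with a | ⟨v, x⟩ <;> rcases b with b | ⟨u, y⟩
  · obtain ⟨p, hp⟩ := hG.exists_walk_length_eq_dist a b
    exact ⟨p.map (coronaInlHom G H), by rw [Walk.length_map, hp]; rfl⟩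
  · obtain ⟨p, hp⟩ := hG.exists_walk_length_eq_dist a u
    exact ⟨(p.map (coronaInlHom G H)).concat (corona_adj_inl_inr.mpr rfl),
      by rw [Walk.length_concat, Walk.length_map, hp]; rfl⟩
  · obtain ⟨p, hp⟩ := hG.exists_walk_length_eq_dist v b
    exact ⟨.cons (corona_adj_inr_inl.mpr rfl) (p.map (coronaInlHom G H)),
      by rw [Walk.length_cons, Walk.length_map, hp]; rfl⟩
  · by_cases hvu : v = u
    · subst hvu
      obtain ⟨p, hp⟩ := (hH v).exists_walk_length_eq_dist x y
      exact ⟨p.map (coronaCopyHom G H v), by rw [Walk.length_map, hp, coronaDist_inr_inr_self]⟩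
    · obtain ⟨p, hp⟩ := hG.exists_walk_length_eq_dist v u
      exact ⟨.cons (corona_adj_inr_inl.mpr rfl)
        ((p.map (coronaInlHom G H)).concat (corona_adj_inl_inr.mpr rfl)), by
        rw [Walk.length_cons, Walk.length_concat, Walk.length_map, hp,
          coronaDist_inr_inr_of_ne hvu]⟩

lemma corona_dist_eq_coronaDist (hG : G.Connected) (hH : ∀ v, (H v).Connected)
    (hdiam : ∀ v, ∀ x y : W v, (H v).dist x y ≤ 2) (a b : V ⊕ (Σ v, W v)) :
    (corona G H).dist a b = coronaDist G H a b := by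
  obtain ⟨p, hp⟩ := exists_walk_length_eq_coronaDist hG hH a b
  obtain ⟨q, hq⟩ := Reachable.exists_walk_length_eq_dist ⟨p⟩
  exact le_antisymm (hp ▸ dist_le p) (hq ▸ coronaDist_le_length hdiam q)

lemma coronaDist_inr_eq_of_ne {v : V} (x y : W v) {w : V ⊕ (Σ v, W v)}
    (hw : ∀ z : W v, w ≠ .inr ⟨v, z⟩) :
    coronaDist G H (.inr ⟨v, x⟩) w = coronaDist G H (.inr ⟨v, y⟩) w := by
  rcases w with w | ⟨u, z⟩
  · rfl
  · have hvu : v ≠ u := by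
      rintro rfl
      exact hw z rfl
    rw [coronaDist_inr_inr_of_ne hvu, coronaDist_inr_inr_of_ne hvu]

lemma coronaDist_separated [Fintype V] (hn : 2 ≤ Fintype.card V) (hG : G.Connected)
    (hdiam : ∀ v, ∀ x y : W v, (H v).dist x y ≤ 2) {a b : V ⊕ (Σ v, W v)} (hab : a ≠ b) :
    (∃ v x y, a = .inr ⟨v, x⟩ ∧ b = .inr ⟨v, y⟩) ∨
      ∃ w, ∀ z : W w, coronaDist G H a (.inr ⟨w, z⟩) ≠ coronaDist G H b (.inr ⟨w, z⟩) := by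
  have hub_copy (a u : V) (y : W u) : ∃ w, ∀ z : W w,
      coronaDist G H (.inl a) (.inr ⟨w, z⟩) ≠ coronaDist G H (.inr ⟨u, y⟩) (.inr ⟨w, z⟩) := by
    by_cases hau : a = u
    · subst hau
      obtain ⟨w, hw⟩ := Fintype.exists_ne_of_one_lt_card hn a
      refine ⟨w, fun z => ?_⟩
      rw [coronaDist_inr_inr_of_ne hw.symm]
      simp only [coronaDist]
      omega
    · refine ⟨a, fun z => ?_⟩
      rw [coronaDist_inr_inr_of_ne (Ne.symm hau)]
      simp only [coronaDist, SimpleGraph.dist_self]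
      omega
  rcases a with a | ⟨v, x⟩ <;> rcases b with b | ⟨u, y⟩
  · right
    refine ⟨a, fun z => ?_⟩
    have := hG.pos_dist_of_ne (Ne.symm (Sum.inl_injective.ne_iff.mp hab))
    simp only [coronaDist, SimpleGraph.dist_self]
    omega
  · exact .inr (hub_copy a u y)
  · exact .inr ((hub_copy b v x).imp fun _ h z => (h z).symm)
  · by_cases hvu : v = u
    · exact .inl ⟨v, x, hvu ▸ y, rfl, by subst hvu; rfl⟩
    · right
      refine ⟨v, fun z => ?_⟩
      have := hG.pos_dist_of_ne (Ne.symm hvu)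
      have := hdiam v x z
      rw [coronaDist_inr_inr_self, coronaDist_inr_inr_of_ne (Ne.symm hvu)]
      omega

end Distances

section Generators

open Finset Function

variable {V : Type*} {W : V → Type*} {G : SimpleGraph V} {H : ∀ v, SimpleGraph (W v)}

variable (W) in
def copyEmb (v : V) : W v ↪ V ⊕ (Σ v, W v) := (Embedding.sigmaMk v).trans .inr

@[simp]
lemma copyEmb_apply (v : V) (x : W v) : copyEmb W v x = .inr ⟨v, x⟩ := rfl

noncomputable def restrictCopy (S : Finset (V ⊕ (Σ v, W v))) (v : V) : Finset (W v) :=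
  S.preimage (copyEmb W v) (copyEmb W v).injective.injOn

lemma sum_card_restrictCopy_le [Fintype V] (S : Finset (V ⊕ (Σ v, W v))) :
    ∑ v, (restrictCopy S v).card ≤ S.card := by
  rw [← card_sigma, ← card_map .inr]
  refine card_le_card fun w hw => ?_
  simp only [mem_map, mem_sigma, mem_univ, true_and] at hw
  obtain ⟨⟨v, x⟩, hx, rfl⟩ := hw
  simpa [restrictCopy] using hx

variable [Fintype V] [∀ v, Fintype (W v)] {k : ℕ}

lemma kMetricGen_corona [∀ v, Nontrivial (W v)] (hn : 2 ≤ Fintype.card V) (hG : G.Connected)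
    (hH : ∀ v, (H v).Connected) (hdiam : ∀ v, ∀ x y : W v, (H v).dist x y ≤ 2)
    {B : ∀ v, Finset (W v)} (hB : ∀ v, kMetricGen (H v) k (B v)) :
    kMetricGen (corona G H) k ↑((univ.sigma B).map .inr : Finset (V ⊕ (Σ v, W v))) := by
  have hsub {v : V} {T : Finset (W v)} (hT : T ⊆ B v) :
      T.map (copyEmb W v) ⊆ (univ.sigma B).map .inr := fun w hw => by
    obtain ⟨x, hx, rfl⟩ := mem_map.mp hw
    simpa using hT hx
  intro a b hab
  simp only [corona_dist_eq_coronaDist hG hH hdiam]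
  rcases coronaDist_separated hn hG hdiam hab with ⟨v, x, y, rfl, rfl⟩ | ⟨w, hw⟩
  · obtain ⟨T, hTB, hTk, hT⟩ := hB v x y fun h => hab (by rw [h])
    exact ⟨T.map (copyEmb W v), coe_subset.mpr (hsub (coe_subset.mp hTB)), by simpa using hTk,
      by simpa using hT⟩
  · exact ⟨(B w).map (copyEmb W w), coe_subset.mpr (hsub subset_rfl),
      by simpa using (hB w).le_card, by simpa using fun z _ => hw z⟩

lemma kMetricGen_restrictCopy (hG : G.Connected) (hH : ∀ v, (H v).Connected)
    (hdiam : ∀ v, ∀ x y : W v, (H v).dist x y ≤ 2) {S : Finset (V ⊕ (Σ v, W v))}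
    (hS : kMetricGen (corona G H) k S) (v : V) : kMetricGen (H v) k (restrictCopy S v) := by
  intro x y hxy
  obtain ⟨T, hTS, hTk, hT⟩ := hS _ _ ((copyEmb W v).injective.ne hxy)
  simp only [corona_dist_eq_coronaDist hG hH hdiam] at hT
  have hT_copy : T ⊆ (restrictCopy T v).map (copyEmb W v) := by
    intro w hw
    by_contra hw'
    refine hT w hw (coronaDist_inr_eq_of_ne x y fun z hz => hw' ?_)
    subst hz
    simpa [restrictCopy] using hw
  refine ⟨restrictCopy T v, ?_, ?_, fun z hz => ?_⟩
  · intro z hz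
    simpa [restrictCopy] using hTS (by simpa [restrictCopy] using hz)
  · simpa using hTk.trans (card_le_card hT_copy)
  · simpa [corona_dist_eq_coronaDist hG hH hdiam] using hT _ (mem_preimage.mp hz)

end Generators

theorem stmt_17_general {V : Type*} [Fintype V] (hn : 2 ≤ Fintype.card V) {W : V → Type*}
    [∀ v, Fintype (W v)] [∀ v, Nontrivial (W v)] (G : SimpleGraph V) (hG : G.Connected)
    (H : ∀ v, SimpleGraph (W v)) (hH : ∀ v, (H v).Connected)
    (kk : V → ℕ) (hdim : ∀ v, kMetricDimensional (H v) (kk v))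
    (hdiam : ∀ v, ∀ x y : W v, (H v).dist x y ≤ 2)
    (k : ℕ) (hk : ∀ v, k ≤ kk v) :
    kMetricDim (corona G H) k = ∑ v, kMetricDim (H v) k := by
  choose B hB hB_card using fun v =>
    exists_kMetricGen_card_eq_kMetricDim ((hdim v).exists_kMetricGen (hk v))
  have hgen := kMetricGen_corona hn hG hH hdiam hB
  obtain ⟨S, hS, hS_card⟩ := exists_kMetricGen_card_eq_kMetricDim ⟨_, hgen⟩
  refine le_antisymm ?_ ?_
  · calc kMetricDim (corona G H) k ≤ ((Finset.univ.sigma B).map .inr).card :=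
          kMetricDim_le_card hgen
      _ = ∑ v, kMetricDim (H v) k := by simp [hB_card]
  · calc ∑ v, kMetricDim (H v) k ≤ ∑ v, (restrictCopy S v).card :=
          Finset.sum_le_sum fun v _ => kMetricDim_le_card (kMetricGen_restrictCopy hG hH hdiam hS v)
      _ ≤ S.card := sum_card_restrictCopy_le S
      _ = kMetricDim (corona G H) k := hS_card

/-- if each `H v` is `kk v`-metric dimensional of diameter at most 2, then
for every `k` with `1 ≤ k ≤ min_v kk v`, `dim_k(G ⊙ 𝓗) = Σ dim_k(H_v)`. -/
theorem stmt_17 {V : Type*} [Fintype V] (hn : 2 ≤ Fintype.card V) {W : V → Type*}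
    [∀ v, Fintype (W v)] [∀ v, Nontrivial (W v)] (G : SimpleGraph V) (hG : G.Connected)
    (H : ∀ v, SimpleGraph (W v)) (hH : ∀ v, (H v).Connected)
    (kk : V → ℕ) (hdim : ∀ v, kMetricDimensional (H v) (kk v))
    (hdiam : ∀ v, ∀ x y : W v, (H v).dist x y ≤ 2)
    (k : ℕ) (hk1 : 1 ≤ k) (hk : ∀ v, k ≤ kk v) :
    kMetricDim (corona G H) k = ∑ v, kMetricDim (H v) k :=
  stmt_17_general hn G hG H hH kk hdim hdiam k hk
end

section
/- For any integer n ≥ 6, the 2-metric dimension of the fan graph F_{1,n} = K_1 + P_n equals ⌈(n+1)/2⌉, and the 3-metric dimension equals n − ⌊(n−4)/5⌋. -/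
open SimpleGraph

/-!
In `K₁ + H` any two vertices are at distance at most two (through the hub), so `w` distinguishes
`u ≠ v` exactly when `w ∈ {u, v}` or `w` is adjacent to exactly one of them. For path vertices
`i < j ≤ i + 2` of the fan the distinguishing vertices all lie in the window `i - 1, …, j + 1`.

For a `k`-metric generator mark its path positions by a 0/1 function `x`; each window then contains
at least `k` ones. For `k = 2` every zero has a one next to it, and sending each zero to such a
neighbour (preferring the right one) is injective and misses the one at `0` or at `2`, so there
are more ones than zeros. For `k = 3` the first and last four positions are ones and any two
zeros are at least five apart, so there are at most `⌊(n - 4) / 5⌋` zeros.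

Conversely, the even positions together with the last one form a 2-metric generator, and all path
positions except `4, 9, 14, …` (up to `n - 5`) form a 3-metric generator.
-/

open Finset

section MetricGenerators

variable {V : Type*} [Fintype V] {G : SimpleGraph V} {k m : ℕ}

theorem kMetricGen_coe_iff {S : Finset V} :
    kMetricGen G k ↑S ↔ ∀ u v, u ≠ v → k ≤ #{w ∈ S | G.dist u w ≠ G.dist v w} := by
  refine forall₂_congr fun u v => imp_congr_right fun _ =>
    ⟨?_, fun h => ⟨_, coe_subset.2 (filter_subset _ _), h, fun w hw => (mem_filter.1 hw).2⟩⟩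
  rintro ⟨T, hTS, hk, hT⟩
  exact hk.trans (card_le_card fun w hw => mem_filter.2 ⟨hTS hw, hT w hw⟩)

theorem kMetricDim_eq (S₀ : Finset V) (h₀ : kMetricGen G k ↑S₀) (hcard : #S₀ = m)
    (hmin : ∀ S : Finset V, kMetricGen G k ↑S → m ≤ #S) : kMetricDim G k = m :=
  le_antisymm (Nat.sInf_le ⟨S₀, h₀, hcard⟩)
    (le_csInf ⟨m, S₀, h₀, hcard⟩ fun _ ⟨S, hS, hm⟩ => hm ▸ hmin S hS)

end MetricGenerators

theorem le_card_filter_of_list {α : Type*} [DecidableEq α] {s : Finset α} {q : α → Prop}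
    [DecidablePred q] {k : ℕ} (L E : List α) (hlen : k + E.length ≤ L.length)
    (hL : L.Nodup ∧ ∀ a ∈ L, a ∈ s ∧ (q a ∨ a ∈ E)) : k ≤ #{a ∈ s | q a} := by
  have hsub : L.toFinset ⊆ {a ∈ s | q a} ∪ E.toFinset := fun a ha => by
    obtain ⟨has, hq | hE⟩ := hL.2 a (List.mem_toFinset.1 ha)
    · exact mem_union_left _ (mem_filter.2 ⟨has, hq⟩)
    · exact mem_union_right _ (List.mem_toFinset.2 hE)
  have := (card_le_card hsub).trans (card_union_le _ _)
  rw [List.toFinset_card_of_nodup hL.1] at this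
  have := E.toFinset_card_le
  omega

section K1join

variable {U : Type*} {H : SimpleGraph U}

@[simp] theorem K1join_adj_none_some (a : U) : (K1join H).Adj none (some a) := by
  simp [K1join]

@[simp] theorem K1join_adj_some_none (a : U) : (K1join H).Adj (some a) none := by
  simp [K1join]

@[simp] theorem K1join_adj_some_some {a b : U} :
    (K1join H).Adj (some a) (some b) ↔ H.Adj a b := by
  simp only [K1join, fromRel_adj, ne_eq, Option.some.injEq]
  exact ⟨fun h => h.2.elim id fun h' => h'.symm, fun h => ⟨h.ne, Or.inl h⟩⟩

theorem K1join_dist_eq_two {x y : Option U} (hxy : x ≠ y) (hadj : ¬(K1join H).Adj x y) :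
    (K1join H).dist x y = 2 := by
  rw [SimpleGraph.dist, ENat.toNat_eq_iff two_ne_zero, Nat.cast_ofNat, edist_eq_two_iff]
  refine ⟨hxy, hadj, none, ?_⟩
  cases x <;> cases y <;> simp_all [mem_commonNeighbors]

theorem K1join_dist_ne_dist_iff {u v w : Option U} (huv : u ≠ v) :
    (K1join H).dist u w ≠ (K1join H).dist v w ↔
      w = u ∨ w = v ∨ ¬((K1join H).Adj u w ↔ (K1join H).Adj v w) := by
  classical
  have hdist (x : Option U) : (K1join H).dist x w =
      if x = w then 0 else if (K1join H).Adj x w then 1 else 2 := by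
    split_ifs with hxw hadj
    · simp [hxw]
    · exact dist_eq_one_iff_adj.2 hadj
    · exact K1join_dist_eq_two hxw hadj
  rw [hdist, hdist]
  by_cases hwu : u = w <;> by_cases hwv : v = w <;> split_ifs <;> simp_all [eq_comm]

end K1join

section Fan

variable {n k : ℕ}

abbrev fanGraph (n : ℕ) : SimpleGraph (Option (Fin n)) := K1join (pathGraph n)

/-- The path vertex `a` distinguishes the path vertices `i ≠ j` of the fan, in `ℕ` coordinates
(see `fanGraph_dist_ne_iff`). -/
def FanResolves (i j a : ℕ) : Prop :=
  a = i ∨ a = j ∨ ¬((i + 1 = a ∨ a + 1 = i) ↔ (j + 1 = a ∨ a + 1 = j))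

instance (i j a : ℕ) : Decidable (FanResolves i j a) := by
  unfold FanResolves; infer_instance

theorem fanGraph_dist_ne_iff {a b c : Fin n} (hab : a ≠ b) :
    (fanGraph n).dist (some a) (some c) ≠ (fanGraph n).dist (some b) (some c) ↔
      FanResolves a b c := by
  rw [K1join_dist_ne_dist_iff (Option.some_injective _ |>.ne hab)]
  simp [FanResolves, pathGraph_adj, Fin.ext_iff]

theorem fanGraph_dist_none_eq (a b : Fin n) :
    (fanGraph n).dist (some a) none = (fanGraph n).dist (some b) none := by
  rw [dist_eq_one_iff_adj.2 (K1join_adj_some_none a),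
    dist_eq_one_iff_adj.2 (K1join_adj_some_none b)]

theorem fanGraph_dist_none_ne {b c : Fin n} (h : ¬(pathGraph n).Adj b c) :
    (fanGraph n).dist none (some c) ≠ (fanGraph n).dist (some b) (some c) :=
  (K1join_dist_ne_dist_iff (Option.some_ne_none b).symm).2 (Or.inr (Or.inr (by simp [h])))

def pathVertex (n i : ℕ) : Option (Fin n) := if h : i < n then some ⟨i, h⟩ else none

theorem pathVertex_of_lt {i : ℕ} (h : i < n) : pathVertex n i = some ⟨i, h⟩ := dif_pos h

theorem pathVertex_injOn_filter (q : ℕ → Prop) [DecidablePred q] :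
    Set.InjOn (pathVertex n) ↑{a ∈ range n | q a} := by
  intro i hi j hj h
  rw [mem_coe, mem_filter, mem_range] at hi hj
  simpa [pathVertex_of_lt hi.1, pathVertex_of_lt hj.1] using h

def pathIndicator (S : Finset (Option (Fin n))) (a : ℕ) : ℕ :=
  if pathVertex n a ∈ S then 1 else 0

/-- `k`-resolvability of the pairs of path vertices by the path positions marked by a 0/1
function `x`. -/
def PathResolving (n k : ℕ) (x : ℕ → ℕ) : Prop :=
  ∀ i j, i < j → j < n → k ≤ ∑ a ∈ range n with FanResolves i j a, x a

theorem pathResolving_pathIndicator {S : Finset (Option (Fin n))}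
    (hS : kMetricGen (fanGraph n) k ↑S) : PathResolving n k (pathIndicator S) := by
  intro i j hij hj
  have hi := hij.trans hj
  have hne : (⟨i, hi⟩ : Fin n) ≠ ⟨j, hj⟩ := by simp [hij.ne]
  calc k ≤ #{w ∈ S | (fanGraph n).dist (some ⟨i, hi⟩) w ≠
          (fanGraph n).dist (some ⟨j, hj⟩) w} :=
        kMetricGen_coe_iff.1 hS _ _ (by simpa using hne)
    _ ≤ #(image (pathVertex n) {a ∈ range n | FanResolves i j a ∧ pathVertex n a ∈ S}) := by
        refine card_le_card fun w hw => ?_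
        rw [mem_filter] at hw
        rcases w with _ | c
        · exact absurd (fanGraph_dist_none_eq _ _) hw.2
        · rw [fanGraph_dist_ne_iff hne] at hw
          refine mem_image.2
            ⟨c, mem_filter.2 ⟨mem_range.2 c.2, hw.2, ?_⟩, pathVertex_of_lt c.2⟩
          rw [pathVertex_of_lt c.2]
          exact hw.1
    _ ≤ #{a ∈ range n | FanResolves i j a ∧ pathVertex n a ∈ S} := card_image_le
    _ = ∑ a ∈ range n with FanResolves i j a, pathIndicator S a := by
        rw [← filter_filter, card_filter]
        rfl

theorem PathResolving.le_sum_map {x : ℕ → ℕ} (hx : PathResolving n k x) {i j : ℕ}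
    (hij : i < j) (hj : j < n) (L : List ℕ) (hL : ∀ a < n, FanResolves i j a → a ∈ L) :
    k ≤ (L.map x).sum := by
  classical
  calc k ≤ ∑ a ∈ range n with FanResolves i j a, x a := hx i j hij hj
    _ ≤ ∑ a ∈ L.toFinset, x a := by
        refine sum_le_sum_of_subset fun a ha => ?_
        rw [mem_filter, mem_range] at ha
        exact List.mem_toFinset.2 (hL a ha.1 ha.2)
    _ ≤ ∑ a ∈ L.toFinset, L.count a • x a := by
        refine sum_le_sum fun a ha => ?_
        rw [smul_eq_mul]
        exact Nat.le_mul_of_pos_left _ (List.count_pos_iff.2 (List.mem_toFinset.1 ha))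
    _ = (L.map x).sum := (sum_list_map_count L x).symm

theorem PathResolving.le_add_add {x : ℕ → ℕ} (hx : PathResolving n k x) {i j : ℕ}
    (hij : i < j) (hj : j < n) (a b c : ℕ)
    (hL : ∀ l < n, FanResolves i j l → l = a ∨ l = b ∨ l = c) :
    k ≤ x a + x b + x c := by
  simpa [add_assoc] using hx.le_sum_map hij hj [a, b, c] fun l hl h => by simpa using hL l hl h

theorem PathResolving.le_add_add_add {x : ℕ → ℕ} (hx : PathResolving n k x) {i j : ℕ}
    (hij : i < j) (hj : j < n) (a b c d : ℕ)
    (hL : ∀ l < n, FanResolves i j l → l = a ∨ l = b ∨ l = c ∨ l = d) :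
    k ≤ x a + x b + x c + x d := by
  simpa [add_assoc] using hx.le_sum_map hij hj [a, b, c, d] fun l hl h => by simpa using hL l hl h

def pathSet (n : ℕ) (p : ℕ → Prop) [DecidablePred p] : Finset (Option (Fin n)) :=
  {a ∈ range n | p a}.image (pathVertex n)

variable {p : ℕ → Prop} [DecidablePred p]

theorem card_pathSet : #(pathSet n p) = #{a ∈ range n | p a} :=
  card_image_of_injOn (pathVertex_injOn_filter p)

theorem kMetricGen_pathSet
    (hcenter : ∀ j < n, k ≤ #{a ∈ range n | p a ∧ ¬(j + 1 = a ∨ a + 1 = j)})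
    (hpair : ∀ i j, i < j → j < n → k ≤ #{a ∈ range n | p a ∧ FanResolves i j a}) :
    kMetricGen (fanGraph n) k ↑(pathSet n p) := by
  have hmem {a : ℕ} (ha : a < n) (hpa : p a) : some ⟨a, ha⟩ ∈ pathSet n p :=
    mem_image.2 ⟨a, mem_filter.2 ⟨mem_range.2 ha, hpa⟩, pathVertex_of_lt ha⟩
  have center (b : Fin n) :
      k ≤ #{w ∈ pathSet n p | (fanGraph n).dist none w ≠ (fanGraph n).dist (some b) w} := by
    refine (hcenter b b.2).trans
      (card_le_card_of_injOn _ (fun a ha => ?_) (pathVertex_injOn_filter _))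
    rw [mem_coe, mem_filter, mem_range] at ha
    rw [pathVertex_of_lt ha.1]
    exact mem_filter.2
      ⟨hmem ha.1 ha.2.1, fanGraph_dist_none_ne (by simpa [pathGraph_adj] using ha.2.2)⟩
  have pair (a b : Fin n) (hab : a < b) :
      k ≤ #{w ∈ pathSet n p |
        (fanGraph n).dist (some a) w ≠ (fanGraph n).dist (some b) w} := by
    refine (hpair a b hab b.2).trans
      (card_le_card_of_injOn _ (fun c hc => ?_) (pathVertex_injOn_filter _))
    rw [mem_coe, mem_filter, mem_range] at hc
    rw [pathVertex_of_lt hc.1]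
    exact mem_filter.2 ⟨hmem hc.1 hc.2.1, (fanGraph_dist_ne_iff hab.ne).2 hc.2.2⟩
  have hsymm (u v : Option (Fin n)) :
      #{w ∈ pathSet n p | (fanGraph n).dist u w ≠ (fanGraph n).dist v w} =
        #{w ∈ pathSet n p | (fanGraph n).dist v w ≠ (fanGraph n).dist u w} := by
    simp_rw [ne_comm]
  rw [kMetricGen_coe_iff]
  rintro (_ | a) (_ | b) huv
  · exact absurd rfl huv
  · exact center b
  · rw [hsymm]; exact center a
  · rcases lt_or_gt_of_ne (Option.some_injective _ |>.ne_iff.1 huv) with hab | hab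
    · exact pair a b hab
    · rw [hsymm]; exact pair b a hab

end Fan

section Windows

variable {n : ℕ} {x : ℕ → ℕ}

theorem card_zeros_add_card_ones (hx : ∀ a, x a ≤ 1) :
    #{a ∈ range n | x a = 0} + #{a ∈ range n | x a = 1} = n := by
  have hsplit := card_filter_add_card_filter_not (s := range n) (fun a => x a = 0)
  rwa [card_range, filter_congr fun a _ => show ¬x a = 0 ↔ x a = 1 by have := hx a; omega]
    at hsplit

theorem PathResolving.pred_eq_one_of_eq_zero (hres : PathResolving n 2 x) (hx : ∀ a, x a ≤ 1)
    (hn : 4 ≤ n) {z : ℕ} (hz : z < n) (h0 : x z = 0) (hr : ¬(z + 1 < n ∧ x (z + 1) = 1)) :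
    2 ≤ z ∧ x (z - 1) = 1 := by
  have := hx (z - 2); have := hx (z - 1); have := hx (z + 1); have := hx (z + 2)
  obtain hz' | hz' | hz' | hz' | hz' :
      z + 1 = n ∨ z = 0 ∨ z = 1 ∨ z + 2 = n ∨ (2 ≤ z ∧ z + 2 < n) := by omega
  · have := hres.le_add_add (i := z - 1) (j := z) (by omega) hz (z - 2) (z - 1) z
      fun l _ h => by unfold FanResolves at h; omega
    omega
  · have := hres.le_add_add (i := z) (j := z + 1) (by omega) (by omega) z (z + 1) (z + 2)
      fun l _ h => by unfold FanResolves at h; omega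
    omega
  · have := hres.le_add_add (i := z - 1) (j := z) (by omega) hz (z - 1) z (z + 1)
      fun l _ h => by unfold FanResolves at h; omega
    omega
  · have := hres.le_add_add (i := z) (j := z + 1) (by omega) (by omega) (z - 1) z (z + 1)
      fun l _ h => by unfold FanResolves at h; omega
    omega
  · have := hres.le_add_add_add (i := z) (j := z + 1) (by omega) (by omega)
      (z - 1) z (z + 1) (z + 2) fun l _ h => by unfold FanResolves at h; omega
    omega

theorem PathResolving.succ_eq_one_of_eq_zero_of_eq_zero (hres : PathResolving n 2 x)
    (hx : ∀ a, x a ≤ 1) {z z' : ℕ} (hzz' : z + 2 = z') (hz' : z' < n) (h0 : x z = 0)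
    (h1 : x (z + 1) = 1) (h0' : x z' = 0) : z' + 1 < n ∧ x (z' + 1) = 1 := by
  have := hx (z' + 1)
  obtain hlast | hlast : z' + 1 = n ∨ z' + 1 < n := by omega
  · have := hres.le_add_add (i := z + 1) (j := z') (by omega) hz' z (z + 1) z'
      fun l _ h => by unfold FanResolves at h; omega
    omega
  · have := hres.le_add_add_add (i := z + 1) (j := z') (by omega) hz' z (z + 1) z' (z' + 1)
      fun l _ h => by unfold FanResolves at h; omega
    omega

theorem card_zeros_lt_card_ones (hn : 4 ≤ n) (hx : ∀ a, x a ≤ 1)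
    (hres : PathResolving n 2 x) :
    #{a ∈ range n | x a = 0} < #{a ∈ range n | x a = 1} := by
  have w012 := hres.le_add_add (i := 0) (j := 1) (by omega) (by omega) 0 1 2
    fun l _ h => by unfold FanResolves at h; omega
  have w023 := hres.le_add_add (i := 0) (j := 2) (by omega) (by omega) 0 2 3
    fun l _ h => by unfold FanResolves at h; omega
  have := hx 0; have := hx 1; have := hx 2
  -- send each zero to a neighbouring one, preferring the right; `a₀` is never hit
  let φ : ℕ → ℕ := fun z => if z + 1 < n ∧ x (z + 1) = 1 then z + 1 else z - 1
  let a₀ := if x 0 = 1 then 0 else 2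
  have ha₀ : a₀ ∈ {a ∈ range n | x a = 1} := by
    simp only [a₀, mem_filter, mem_range]
    split_ifs <;> omega
  have maps : Set.MapsTo φ (↑{a ∈ range n | x a = 0} : Set ℕ)
      ({a ∈ range n | x a = 1}.erase a₀) := by
    intro z hz
    obtain ⟨hz, h0⟩ := mem_filter.1 hz
    rw [mem_range] at hz
    simp only [φ, a₀, mem_coe, mem_erase, mem_filter, mem_range]
    split_ifs with hr h00
    · omega
    · obtain rfl | h1 := eq_or_ne z 1 <;> omega
    · have := hres.pred_eq_one_of_eq_zero hx hn hz h0 hr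
      omega
    · have := hres.pred_eq_one_of_eq_zero hx hn hz h0 hr
      obtain rfl | h3 := eq_or_ne z 3 <;> omega
  have inj : Set.InjOn φ (↑{a ∈ range n | x a = 0} : Set ℕ) := by
    intro z hz z' hz' he
    obtain ⟨hz, h0⟩ := mem_filter.1 hz
    obtain ⟨hz', h0'⟩ := mem_filter.1 hz'
    rw [mem_range] at hz hz'
    simp only [φ] at he
    split_ifs at he with hr hr' hr'
    · omega
    · have := hres.succ_eq_one_of_eq_zero_of_eq_zero hx (by omega) hz' h0 hr.2 h0'
      omega
    · have := hres.succ_eq_one_of_eq_zero_of_eq_zero hx (by omega) hz h0' hr'.2 h0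
      omega
    · have := hres.pred_eq_one_of_eq_zero hx hn hz h0 hr
      have := hres.pred_eq_one_of_eq_zero hx hn hz' h0' hr'
      omega
  calc #{a ∈ range n | x a = 0} ≤ #({a ∈ range n | x a = 1}.erase a₀) :=
        card_le_card_of_injOn φ maps inj
    _ < #{a ∈ range n | x a = 1} := card_erase_lt_of_mem ha₀

theorem PathResolving.four_le_and_add_five_le (hres : PathResolving n 3 x) (hx : ∀ a, x a ≤ 1)
    (hn : 4 ≤ n) {a : ℕ} (ha : a < n) (h0 : x a = 0) : 4 ≤ a ∧ a + 5 ≤ n := by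
  have := hres.le_add_add (i := 0) (j := 1) (by omega) (by omega) 0 1 2
    fun l _ h => by unfold FanResolves at h; omega
  have := hres.le_add_add (i := 0) (j := 2) (by omega) (by omega) 0 2 3
    fun l _ h => by unfold FanResolves at h; omega
  have := hres.le_add_add (i := n - 2) (j := n - 1) (by omega) (by omega)
    (n - 3) (n - 2) (n - 1) fun l _ h => by unfold FanResolves at h; omega
  have := hres.le_add_add (i := n - 3) (j := n - 1) (by omega) (by omega)
    (n - 4) (n - 3) (n - 1) fun l _ h => by unfold FanResolves at h; omega
  have := hx 0; have := hx 1; have := hx 2; have := hx 3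
  have := hx (n - 1); have := hx (n - 2); have := hx (n - 3); have := hx (n - 4)
  by_contra hnear
  obtain rfl | rfl | rfl | rfl | rfl | rfl | rfl | rfl :
      a = 0 ∨ a = 1 ∨ a = 2 ∨ a = 3 ∨
        a = n - 1 ∨ a = n - 2 ∨ a = n - 3 ∨ a = n - 4 := by omega
  all_goals omega

theorem PathResolving.add_five_le (hres : PathResolving n 3 x) (hx : ∀ a, x a ≤ 1)
    (hn : 4 ≤ n) {a b : ℕ} (hab : a < b) (hb : b < n) (ha0 : x a = 0) (hb0 : x b = 0) :
    a + 5 ≤ b := by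
  have ha4 := hres.four_le_and_add_five_le hx hn (hab.trans hb) ha0
  have hb5 := hres.four_le_and_add_five_le hx hn hb hb0
  have := hx (a - 1); have := hx (a + 1); have := hx (a + 2); have := hx (a + 3)
  have := hx (b + 1)
  by_contra hclose
  obtain e | e | e | e : b = a + 1 ∨ b = a + 2 ∨ b = a + 3 ∨ b = a + 4 := by omega
  · have := hres.le_add_add_add (i := a) (j := b) (by omega) (by omega) (a - 1) a b (b + 1)
      fun l _ h => by unfold FanResolves at h; omega
    omega
  · have := hres.le_add_add_add (i := a) (j := a + 1) (by omega) (by omega) (a - 1) a (a + 1) b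
      fun l _ h => by unfold FanResolves at h; omega
    omega
  · have := hres.le_add_add_add (i := a + 1) (j := a + 2) (by omega) (by omega)
      a (a + 1) (a + 2) b fun l _ h => by unfold FanResolves at h; omega
    omega
  · have := hres.le_add_add_add (i := a + 1) (j := a + 3) (by omega) (by omega)
      a (a + 1) (a + 3) b fun l _ h => by unfold FanResolves at h; omega
    omega

theorem card_zeros_le (hn : 4 ≤ n) (hx : ∀ a, x a ≤ 1) (hres : PathResolving n 3 x) :
    #{a ∈ range n | x a = 0} ≤ (n - 4) / 5 := by
  have hzero {a : ℕ} (ha : a ∈ (↑{a ∈ range n | x a = 0} : Set ℕ)) : a < n ∧ x a = 0 :=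
    by simpa using ha
  -- zeros lie in `[4, n - 5]` and are at least five apart, so `a ↦ (a - 4) / 5` is injective
  calc #{a ∈ range n | x a = 0} ≤ #(range ((n - 4) / 5)) := by
        refine card_le_card_of_injOn (fun a => (a - 4) / 5) (fun a ha => ?_)
          fun a ha b hb he => ?_
        · have := hres.four_le_and_add_five_le hx hn (hzero ha).1 (hzero ha).2
          simp only [coe_range, Set.mem_Iio]
          omega
        · have := hres.four_le_and_add_five_le hx hn (hzero ha).1 (hzero ha).2
          have := hres.four_le_and_add_five_le hx hn (hzero hb).1 (hzero hb).2
          obtain hab | rfl | hab := lt_trichotomy a b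
          · have := hres.add_five_le hx hn hab (hzero hb).1 (hzero ha).2 (hzero hb).2
            simp only at he
            omega
          · rfl
          · have := hres.add_five_le hx hn hab (hzero ha).1 (hzero hb).2 (hzero ha).2
            simp only at he
            omega
    _ = (n - 4) / 5 := card_range _

end Windows

section Bounds

variable {n : ℕ}

theorem pathIndicator_le_one (S : Finset (Option (Fin n))) (a : ℕ) : pathIndicator S a ≤ 1 := by
  unfold pathIndicator; split_ifs <;> omega

theorem card_pathIndicator_eq_one_le (S : Finset (Option (Fin n))) :
    #{a ∈ range n | pathIndicator S a = 1} ≤ #S := by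
  refine card_le_card_of_injOn (pathVertex n) (fun a ha => ?_) (pathVertex_injOn_filter _)
  have := (mem_filter.1 ha).2
  unfold pathIndicator at this
  split_ifs at this with h
  exact h

theorem le_card_of_kMetricGen_two (hn : 4 ≤ n) {S : Finset (Option (Fin n))}
    (hS : kMetricGen (fanGraph n) 2 ↑S) : (n + 2) / 2 ≤ #S := by
  have hx := pathIndicator_le_one S
  have := card_zeros_lt_card_ones hn hx (pathResolving_pathIndicator hS)
  have := card_zeros_add_card_ones (n := n) hx
  have := card_pathIndicator_eq_one_le S
  omega

theorem le_card_of_kMetricGen_three (hn : 4 ≤ n) {S : Finset (Option (Fin n))}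
    (hS : kMetricGen (fanGraph n) 3 ↑S) : n - (n - 4) / 5 ≤ #S := by
  have hx := pathIndicator_le_one S
  have := card_zeros_le hn hx (pathResolving_pathIndicator hS)
  have := card_zeros_add_card_ones (n := n) hx
  have := card_pathIndicator_eq_one_le S
  omega

theorem card_filter_even_or_last (hn : 1 ≤ n) :
    #{a ∈ range n | a % 2 = 0 ∨ a + 1 = n} = (n + 2) / 2 := by
  have : {a ∈ range n | a % 2 = 0 ∨ a + 1 = n} =
      (range ((n + 2) / 2)).image fun t => min (2 * t) (n - 1) := by
    ext a
    simp only [mem_filter, mem_range, mem_image]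
    constructor
    · rintro ⟨ha, hpa⟩
      exact ⟨(a + 1) / 2, by omega, by omega⟩
    · rintro ⟨t, ht, rfl⟩
      omega
  rw [this, card_image_of_injOn fun s hs t ht hst => by
    simp only [coe_range, Set.mem_Iio] at hs ht hst; omega, card_range]

theorem card_filter_not_hole :
    #{a ∈ range n | ¬(a % 5 = 4 ∧ a + 5 ≤ n)} = n - (n - 4) / 5 := by
  have hholes : {a ∈ range n | a % 5 = 4 ∧ a + 5 ≤ n} =
      (range ((n - 4) / 5)).image (5 * · + 4) := by
    ext a
    simp only [mem_filter, mem_range, mem_image]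
    constructor
    · rintro ⟨ha, hpa⟩
      exact ⟨a / 5, by omega, by omega⟩
    · rintro ⟨t, ht, rfl⟩
      omega
  have hsplit := card_filter_add_card_filter_not (s := range n) (fun a => a % 5 = 4 ∧ a + 5 ≤ n)
  rw [hholes, card_image_of_injective _ fun s t hst => by omega, card_range,
    card_range] at hsplit
  omega

theorem kMetricGen_two_pathSet (hn : 6 ≤ n) :
    kMetricGen (fanGraph n) 2 ↑(pathSet n fun a => a % 2 = 0 ∨ a + 1 = n) := by
  refine kMetricGen_pathSet (fun j hj => ?_) fun i j hij hj => ?_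
  · obtain hj | hj | hj : j = 1 ∨ j = 3 ∨ (j ≠ 1 ∧ j ≠ 3) := by omega
    · exact le_card_filter_of_list [4, n - 1] [] le_rfl (by simp; omega)
    · exact le_card_filter_of_list [0, n - 1] [] le_rfl (by simp; omega)
    · exact le_card_filter_of_list [0, 2] [] le_rfl (by simp; omega)
  · -- an even vertex next to or at each of `i` and `j` (or `j` itself if it is the last one)
    obtain hj' | hj' : j + 1 = n ∨ j + 1 < n := by omega
    · exact le_card_filter_of_list [i - i % 2, j] [] le_rfl (by simp [FanResolves]; omega)
    · exact le_card_filter_of_list [i - i % 2, j + j % 2] [] le_rfl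
        (by simp [FanResolves]; omega)

theorem kMetricGen_three_pathSet (hn : 6 ≤ n) :
    kMetricGen (fanGraph n) 3 ↑(pathSet n fun a => ¬(a % 5 = 4 ∧ a + 5 ≤ n)) := by
  refine kMetricGen_pathSet (fun j hj => ?_) fun i j hij hj => ?_
  · obtain hj | hj : j ≤ 3 ∨ 4 ≤ j := by omega
    · exact le_card_filter_of_list [j, (j + 2) % 4, n - 1] [] le_rfl (by simp; omega)
    · exact le_card_filter_of_list [0, 1, 2] [] le_rfl (by simp; omega)
  · -- `m - (m + 1) % 5` is the only possible hole among `m - 4, …, m`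
    obtain h | h | h | h | h : (j ≤ i + 2 ∧ i = 0) ∨ (j ≤ i + 2 ∧ j + 1 = n) ∨
        (j ≤ i + 2 ∧ 1 ≤ i ∧ j + 1 < n) ∨
        (i + 3 ≤ j ∧ i = 0) ∨ (i + 3 ≤ j ∧ 1 ≤ i) := by omega
    · exact le_card_filter_of_list [i, j, j + 1] [] le_rfl (by simp [FanResolves]; omega)
    · exact le_card_filter_of_list [i - 1, i, j] [] le_rfl (by simp [FanResolves]; omega)
    · exact le_card_filter_of_list [i - 1, i, j, j + 1] [j + 1 - (j + 2) % 5] le_rfl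
        (by simp [FanResolves]; omega)
    · exact le_card_filter_of_list [i, i + 1, j - 1, j] [j - (j + 1) % 5] le_rfl
        (by simp [FanResolves]; omega)
    · exact le_card_filter_of_list [i - 1, i, i + 1, j - 1, j]
        [i + 1 - (i + 2) % 5, j - (j + 1) % 5] le_rfl (by simp [FanResolves]; omega)

end Bounds

/-- for `n ≥ 6`, `dim₂(F_{1,n}) = ⌈(n+1)/2⌉` and
`dim₃(F_{1,n}) = n - ⌊(n-4)/5⌋`. -/
theorem stmt_18 (n : ℕ) (hn : 6 ≤ n) :
    kMetricDim (K1join (SimpleGraph.pathGraph n)) 2 = (n + 2) / 2 ∧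
      kMetricDim (K1join (SimpleGraph.pathGraph n)) 3 = n - (n - 4) / 5 := by
  constructor
  · refine kMetricDim_eq _ (kMetricGen_two_pathSet hn) ?_ fun S hS =>
      le_card_of_kMetricGen_two (by omega) hS
    rw [card_pathSet, card_filter_even_or_last (by omega)]
  · refine kMetricDim_eq _ (kMetricGen_three_pathSet hn) ?_ fun S hS =>
      le_card_of_kMetricGen_three (by omega) hS
    rw [card_pathSet, card_filter_not_hole]
end
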